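/- Let D be a positive definite n×n complex matrix with trace 1, defining the faithful state φ(y) = tr(Dy) on the matrix algebra Mₙ(ℂ). Then for every Hermitian x ∈ Mₙ(ℂ), the trace norm ‖D^{1/2} x D^{1/2}‖₁ equals the infimum of φ(a) + φ(b) over all decompositions x = a − b with a, b positive semidefinite. -/

import Mathlib

/-!
Put `S = D^{1/2}`. Congruence `a ↦ S a S` is a bijection of the positive semidefinite matrices
with `tr (D a) = tr (S a S)`, so the infimum is that of `tr A + tr B` over splittings
`y = A - B` of `y = S x S` into positive semidefinite matrices. In an eigenbasis of `y` the
diagonal entries of `A` and `B` are nonnegative and differ by the eigenvalue `λᵢ`, so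
`tr A + tr B ≥ ∑ |λᵢ| = tr |y|`; the splitting `y = y⁺ - y⁻` attains this value, and
`tr |y| = tr (yᴴ y)^{1/2} = ‖y‖₁`.
-/

open scoped ComplexOrder
variable {n : ℕ}

/-- The positive semidefinite square root of a positive semidefinite matrix
(the definition `Matrix.PosSemidef.sqrt` of the older Mathlib, removed since). -/
noncomputable def Matrix.PosSemidef.sqrt {m 𝕜 : Type*} [Fintype m] [DecidableEq m] [RCLike 𝕜]
    {A : Matrix m m 𝕜} (hA : A.PosSemidef) : Matrix m m 𝕜 :=
  hA.1.eigenvectorUnitary.1 * Matrix.diagonal ((↑) ∘ (√·) ∘ hA.1.eigenvalues) *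
    (star hA.1.eigenvectorUnitary : Matrix m m 𝕜)

/-- The trace (Schatten-1) norm of a complex matrix: `tr((y*y)^{1/2})`. -/
noncomputable def traceNorm (y : Matrix (Fin n) (Fin n) ℂ) : ℝ :=
  ((Matrix.PosSemidef.sqrt (Matrix.posSemidef_conjTranspose_mul_self y)).trace).re

open scoped MatrixOrder
open Matrix

namespace Matrix
variable {m 𝕜 : Type*} [Fintype m] [RCLike 𝕜]

def splittingCosts (W x : Matrix m m 𝕜) : Set ℝ :=
  {r | ∃ a b : Matrix m m 𝕜, a.PosSemidef ∧ b.PosSemidef ∧ x = a - b ∧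
    r = RCLike.re (W * a).trace + RCLike.re (W * b).trace}

lemma splittingCosts_subset_conj (T W x : Matrix m m 𝕜) :
    splittingCosts (Tᴴ * W * T) x ⊆ splittingCosts W (T * x * Tᴴ) := by
  have htrace : ∀ c : Matrix m m 𝕜, (Tᴴ * W * T * c).trace = (W * (T * c * Tᴴ)).trace := by
    intro c
    rw [mul_assoc, mul_assoc, trace_mul_comm, mul_assoc, mul_assoc]
  rintro r ⟨a, b, ha, hb, rfl, rfl⟩
  exact ⟨T * a * Tᴴ, T * b * Tᴴ, ha.mul_mul_conjTranspose_same T,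
    hb.mul_mul_conjTranspose_same T, by rw [mul_sub, sub_mul], by rw [htrace, htrace]⟩

variable [DecidableEq m]

lemma splittingCosts_conj {T : Matrix m m 𝕜} (hT : IsUnit T) (W x : Matrix m m 𝕜) :
    splittingCosts W (T * x * Tᴴ) = splittingCosts (Tᴴ * W * T) x := by
  refine subset_antisymm ?_ (splittingCosts_subset_conj T W x)
  have hTd : IsUnit T.det := (isUnit_iff_isUnit_det T).mp hT
  have hTHd : IsUnit Tᴴ.det := (isUnit_iff_isUnit_det _).mp hT.star
  simpa only [conjTranspose_nonsing_inv, ← mul_assoc, mul_nonsing_inv_cancel_right _ _ hTd,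
    mul_nonsing_inv_cancel_right _ _ hTHd, nonsing_inv_mul _ hTd, nonsing_inv_mul _ hTHd, one_mul]
    using splittingCosts_subset_conj T⁻¹ (Tᴴ * W * T) (T * x * Tᴴ)

lemma PosSemidef.sqrt_eq_cfcSqrt {A : Matrix m m 𝕜} (hA : A.PosSemidef) :
    hA.sqrt = CFC.sqrt A := by
  rw [CFC.sqrt_eq_real_sqrt A hA.nonneg, cfcₙ_eq_cfc, hA.1.cfc_eq]
  simp [IsHermitian.cfc, PosSemidef.sqrt, Function.comp_def]

lemma PosSemidef.posSemidef_sqrt {A : Matrix m m 𝕜} (hA : A.PosSemidef) : hA.sqrt.PosSemidef :=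
  hA.sqrt_eq_cfcSqrt ▸ nonneg_iff_posSemidef.mp (CFC.sqrt_nonneg A)

lemma PosSemidef.sqrt_mul_self {A : Matrix m m 𝕜} (hA : A.PosSemidef) : hA.sqrt * hA.sqrt = A :=
  hA.sqrt_eq_cfcSqrt ▸ CFC.sqrt_mul_sqrt_self A hA.nonneg

lemma IsHermitian.trace_cfc {A : Matrix m m 𝕜} (hA : A.IsHermitian) (f : ℝ → ℝ) :
    (cfc f A).trace = ∑ i, (f (hA.eigenvalues i) : 𝕜) := by
  rw [hA.cfc_eq, IsHermitian.cfc, Unitary.conjStarAlgAut_apply, trace_mul_cycle,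
    Unitary.coe_star_mul_self, one_mul, trace_diagonal]
  rfl

lemma IsHermitian.re_trace_abs {A : Matrix m m 𝕜} (hA : A.IsHermitian) :
    RCLike.re (CFC.abs A).trace = ∑ i, |hA.eigenvalues i| := by
  rw [CFC.abs_eq_cfc_norm A hA.isSelfAdjoint, hA.trace_cfc, map_sum]
  simp

lemma IsHermitian.sum_abs_eigenvalues_le_of_eq_sub {y A B : Matrix m m 𝕜} (hy : y.IsHermitian)
    (hA : A.PosSemidef) (hB : B.PosSemidef) (h : y = A - B) :
    ∑ i, |hy.eigenvalues i| ≤ RCLike.re A.trace + RCLike.re B.trace := by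
  set U : Matrix m m 𝕜 := (hy.eigenvectorUnitary : Matrix m m 𝕜)
  have hUU : U * Uᴴ = 1 := Unitary.mul_star_self_of_mem hy.eigenvectorUnitary.2
  have htrace : ∀ M : Matrix m m 𝕜, M.trace = (Uᴴ * M * U).trace := fun M => by
    rw [trace_mul_cycle, hUU, one_mul]
  have hdiag : Uᴴ * A * U - Uᴴ * B * U = diagonal (RCLike.ofReal ∘ hy.eigenvalues) := by
    rw [← sub_mul, ← mul_sub, ← h]
    simpa [U, Unitary.conjStarAlgAut_star_apply, star_eq_conjTranspose]
      using hy.conjStarAlgAut_star_eigenvectorUnitary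
  rw [htrace A, htrace B, trace, trace, map_sum, map_sum, ← Finset.sum_add_distrib]
  refine Finset.sum_le_sum fun i _ => ?_
  have hi := congrArg (fun M => RCLike.re (M i i)) hdiag
  simp only [sub_apply, map_sub, diagonal_apply_eq, Function.comp_apply, RCLike.ofReal_re] at hi
  have ha : 0 ≤ RCLike.re ((Uᴴ * A * U) i i) :=
    (RCLike.nonneg_iff.mp ((hA.conjTranspose_mul_mul_same U).diag_nonneg)).1
  have hb : 0 ≤ RCLike.re ((Uᴴ * B * U) i i) :=
    (RCLike.nonneg_iff.mp ((hB.conjTranspose_mul_mul_same U).diag_nonneg)).1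
  simp only [diag_apply]
  exact abs_le.mpr ⟨by linarith, by linarith⟩

lemma IsHermitian.isLeast_splittingCosts_one {y : Matrix m m 𝕜} (hy : y.IsHermitian) :
    IsLeast (splittingCosts 1 y) (RCLike.re (CFC.abs y).trace) := by
  refine ⟨⟨y⁺, y⁻, nonneg_iff_posSemidef.mp (CFC.posPart_nonneg y),
    nonneg_iff_posSemidef.mp (CFC.negPart_nonneg y),
    (CFC.posPart_sub_negPart y hy.isSelfAdjoint).symm, ?_⟩, ?_⟩
  · rw [one_mul, one_mul, ← map_add, ← trace_add, CFC.posPart_add_negPart y hy.isSelfAdjoint]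
  · rintro r ⟨a, b, ha, hb, rfl, rfl⟩
    simpa only [hy.re_trace_abs, one_mul] using hy.sum_abs_eigenvalues_le_of_eq_sub ha hb rfl

end Matrix

lemma traceNorm_eq_re_trace_abs (y : Matrix (Fin n) (Fin n) ℂ) :
    traceNorm y = (CFC.abs y).trace.re := by
  rw [traceNorm, PosSemidef.sqrt_eq_cfcSqrt]
  rfl

theorem traceNorm_symm_eq_inf_general (D x : Matrix (Fin n) (Fin n) ℂ)
    (hD : D.PosDef) (hx : x.IsHermitian) :
    traceNorm (Matrix.PosSemidef.sqrt hD.posSemidef * x * Matrix.PosSemidef.sqrt hD.posSemidef) =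
      sInf { r : ℝ | ∃ a b : Matrix (Fin n) (Fin n) ℂ,
        a.PosSemidef ∧ b.PosSemidef ∧ x = a - b ∧
        r = ((D * a).trace).re + ((D * b).trace).re } := by
  set S := hD.posSemidef.sqrt
  have hS : Sᴴ = S := hD.posSemidef.posSemidef_sqrt.1
  have hSS : S * S = D := hD.posSemidef.sqrt_mul_self
  have hSu : IsUnit S := isUnit_of_mul_isUnit_left (hSS ▸ hD.isUnit)
  have hy : (S * x * S).IsHermitian := by
    simpa only [hS] using isHermitian_conjTranspose_mul_mul S hx
  have hcost : splittingCosts 1 (S * x * S) = splittingCosts D x := by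
    simpa only [hS, mul_one, hSS] using splittingCosts_conj hSu 1 x
  rw [traceNorm_eq_re_trace_abs]
  exact (hcost ▸ hy.isLeast_splittingCosts_one).csInf_eq.symm

/-- For a faithful state `φ(y) = tr(Dy)` on `Mₙ(ℂ)` and Hermitian `x`, the trace norm of
`D^{1/2} x D^{1/2}` equals the infimum of `φ(a) + φ(b)` over decompositions `x = a − b`
with `a, b` positive semidefinite. -/
theorem traceNorm_symm_eq_inf (D x : Matrix (Fin n) (Fin n) ℂ)
    (hD : D.PosDef) (hDtr : D.trace = 1) (hx : x.IsHermitian) :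
    traceNorm (Matrix.PosSemidef.sqrt hD.posSemidef * x * Matrix.PosSemidef.sqrt hD.posSemidef) =
      sInf { r : ℝ | ∃ a b : Matrix (Fin n) (Fin n) ℂ,
        a.PosSemidef ∧ b.PosSemidef ∧ x = a - b ∧
        r = ((D * a).trace).re + ((D * b).trace).re } :=
  traceNorm_symm_eq_inf_general D x hD hx
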